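/- Let m ∈ ℕ, let (φ_k)_{k=0}^{m} ∈ 𝓗_m, and let x_0 ∈ 𝕋 ∖ 𝕋_Q. Then {φ_{m+1}(x_0) : φ_{m+1} ∈ H(𝕋) such that (φ_k)_{k=0}^{m+1} ∈ 𝓗_{m+1}} = 𝕋; that is, for every y ∈ 𝕋 there exists φ_{m+1} ∈ H(𝕋) with φ_{m+1}(x_0) = y extending the given sequence to an element of 𝓗_{m+1}. -/

import Mathlib

noncomputable section

/-- The circle group 𝕋. -/
abbrev 𝕋 := Circle

/-- Generalised binomial coefficient `C(n,k)` for integer `n`. -/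
def gchoose (n : ℤ) (k : ℕ) : ℤ := Ring.choose n k

/-- Signed Stirling numbers of the first kind, `s(k,j)`, determined by
`k! · C(n,k) = Σ_{j=0}^k s(k,j) n^j`. -/
def stir : ℕ → ℕ → ℤ
  | 0, 0 => 1
  | 0, _ + 1 => 0
  | _ + 1, 0 => 0
  | k + 1, j + 1 => stir k j - (k : ℤ) * stir k (j + 1)

/-- `H(𝕋)`: the set of (not necessarily continuous) group homomorphisms 𝕋 → 𝕋,
as a subset of the product space `𝕋 → 𝕋` (pointwise convergence topology). -/
def HSet : Set (𝕋 → 𝕋) := {f | ∀ x y : 𝕋, f (x * y) = f x * f y}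

/-- `𝕋_Q`: the torsion subgroup of 𝕋. -/
def TQ : Set 𝕋 := {x | ∃ n : ℕ, 0 < n ∧ x ^ n = 1}

/-- The space 𝓗 ⊆ H(𝕋)^{ℤ≥0}: sequences satisfying (H.0) and (H.∞). -/
def Hcal : Set (ℕ → 𝕋 → 𝕋) :=
  {φ | (∀ k, φ k ∈ HSet) ∧ φ 0 = (fun x => x) ∧
    ∀ k, 1 ≤ k → ∀ x ∈ TQ,
      φ k (x ^ Nat.factorial k) = ∏ j ∈ Finset.Icc 1 k, (φ 1)^[j] (x ^ stir k j)}

/-- The element `ñ` (whose `k`-th entry is `C(n,k)^×`), for `n : ℤ`. -/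
def ntil (n : ℤ) : ℕ → 𝕋 → 𝕋 := fun k x => x ^ gchoose n k

/-- The homeomorphism `T` of `H(𝕋)^{ℤ≥0}`: `T(φ) = (φ_0, φ_0φ_1, φ_1φ_2, …)`. -/
def Tmap (φ : ℕ → 𝕋 → 𝕋) : ℕ → 𝕋 → 𝕋 :=
  fun k => match k with
  | 0 => φ 0
  | k + 1 => fun x => φ k x * φ (k + 1) x

/-- The group operation ⋆ on 𝓗: `(φ ⋆ ψ)_k = ∏_{j=0}^k φ_{k-j} ∘ ψ_j`. -/
def hmul (φ ψ : ℕ → 𝕋 → 𝕋) : ℕ → 𝕋 → 𝕋 :=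
  fun k x => ∏ j ∈ Finset.range (k + 1), φ (k - j) (ψ j x)

/-- The space `𝓗_m`, realised with index type `Fin (m+1)` (so `HFin N` has
indices `0, …, N-1`; `𝓗_m = HFin (m+1)`). -/
def HFin (N : ℕ) : Set (Fin N → 𝕋 → 𝕋) :=
  {φ | (∀ k, φ k ∈ HSet) ∧ (∀ k : Fin N, (k : ℕ) = 0 → φ k = fun x => x) ∧
    ∀ k : Fin N, ∀ hk : 1 ≤ (k : ℕ), ∀ x ∈ TQ,
      φ k (x ^ Nat.factorial (k : ℕ)) =
        ∏ j ∈ Finset.Icc 1 (k : ℕ),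
          (φ ⟨1, lt_of_le_of_lt hk k.isLt⟩)^[j] (x ^ stir (k : ℕ) j)}

/-!
The right-hand side of (H.m+1) is a homomorphism `g` of `𝕋` in `x`. On the `(m+1)!`-torsion,
`φ₁` acts as a power map `z ↦ z ^ a` (finite subgroups of `ℂˣ` are cyclic), so there
`g x = x ^ ((m+1)! C(a, m+1)) = 1` by the defining identity `Σ s(k,j) a^j = k! C(a,k)` of the
Stirling numbers. Hence `x ^ (m+1)! ↦ g x` is a well-defined homomorphism on `𝕋_Q`, and it
extends to `𝕋` since `𝕋` is divisible, i.e. an injective `ℤ`-module. Multiplying the extension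
by a character of `𝕋 / 𝕋_Q` taking a prescribed value at the non-torsion class of `x₀` (again
by divisibility) gives any value at `x₀`.
-/

open Finset

lemma stir_eq_zero_of_lt : ∀ {k j : ℕ}, k < j → stir k j = 0
  | 0, _ + 1, _ => rfl
  | k + 1, j + 1, h => by
    rw [stir, stir_eq_zero_of_lt (by omega : k < j), stir_eq_zero_of_lt (by omega : k < j + 1)]
    ring

lemma sum_range_stir_mul_pow (k : ℕ) (a : ℤ) :
    ∑ j ∈ range (k + 1), stir k j * a ^ j = (descPochhammer ℤ k).eval a := by
  induction k with
  | zero => simp [stir]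
  | succ k ih =>
    have hk : (k : ℤ) * stir k 0 = 0 := by cases k <;> simp [stir]
    have hshift : ∑ j ∈ range (k + 1), stir k (j + 1) * a ^ (j + 1) =
        ∑ j ∈ range (k + 1), stir k j * a ^ j - stir k 0 := by
      have := sum_range_succ' (fun j => stir k j * a ^ j) (k + 1)
      rw [sum_range_succ, stir_eq_zero_of_lt (lt_add_one k)] at this
      simp only [zero_mul, add_zero, pow_zero, mul_one] at this
      omega
    have hmul : ∑ j ∈ range (k + 1), stir k j * a ^ (j + 1) =
        a * ∑ j ∈ range (k + 1), stir k j * a ^ j := by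
      rw [mul_sum]; exact sum_congr rfl fun j _ => by ring
    rw [descPochhammer_succ_right, Polynomial.eval_mul, ← ih, sum_range_succ']
    simp only [stir, sub_mul, sum_sub_distrib, mul_assoc, ← mul_sum, hshift, hmul]
    simp only [Polynomial.eval_sub, Polynomial.eval_X, Polynomial.eval_natCast]
    linear_combination hk

lemma sum_Icc_stir_mul_pow (k : ℕ) (a : ℤ) :
    ∑ j ∈ Icc 1 (k + 1), stir (k + 1) j * a ^ j = (k + 1).factorial * Ring.choose a (k + 1) := by
  have hrange : range (k + 1 + 1) = insert 0 (Icc 1 (k + 1)) := by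
    ext j; simp only [mem_range, mem_insert, mem_Icc]; omega
  have hsum := sum_range_stir_mul_pow (k + 1) a
  rw [hrange, sum_insert (by simp), stir, zero_mul, zero_add, Polynomial.eval_eq_smeval,
    Ring.descPochhammer_eq_factorial_smul_choose, nsmul_eq_mul] at hsum
  exact hsum

section Iterate

variable {G : Type*} [CommGroup G]

lemma iterate_map_zpow_of_map_eq_zpow (Ψ : G →* G) {x : G} {a : ℤ} (hx : Ψ x = x ^ a) (j : ℕ)
    (e : ℤ) : Ψ^[j] (x ^ e) = x ^ (e * a ^ j) := by
  induction j generalizing e with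
  | zero => simp
  | succ j ih => rw [Function.iterate_succ_apply', ih, map_zpow, hx, ← zpow_mul, pow_succ]; ring_nf

/-- The right-hand side of (H.k). -/
def stirlingProd (Ψ : G →* G) (k : ℕ) : G →* G where
  toFun x := ∏ j ∈ Icc 1 k, Ψ^[j] (x ^ stir k j)
  map_one' := by simp [iterate_map_one]
  map_mul' x y := by simp only [mul_zpow, iterate_map_mul, prod_mul_distrib]

lemma stirlingProd_apply (Ψ : G →* G) (k : ℕ) (x : G) :
    stirlingProd Ψ k x = ∏ j ∈ Icc 1 k, Ψ^[j] (x ^ stir k j) := rfl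

lemma stirlingProd_succ_apply_of_map_eq_zpow (Ψ : G →* G) {x : G} {a : ℤ} (hx : Ψ x = x ^ a)
    (k : ℕ) : stirlingProd Ψ (k + 1) x = (x ^ (k + 1).factorial) ^ Ring.choose a (k + 1) := by
  have hsum : x ^ ∑ j ∈ Icc 1 (k + 1), stir (k + 1) j * a ^ j =
      ∏ j ∈ Icc 1 (k + 1), x ^ (stir (k + 1) j * a ^ j) :=
    map_sum (zmultiplesHom (Additive G) (Additive.ofMul x)) _ _
  rw [← zpow_natCast, ← zpow_mul, ← sum_Icc_stir_mul_pow, hsum, stirlingProd_apply]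
  exact prod_congr rfl fun j _ => iterate_map_zpow_of_map_eq_zpow Ψ hx j (stir (k + 1) j)

end Iterate

lemma Circle.zpow_surjective {n : ℤ} (hn : n ≠ 0) : Function.Surjective fun z : 𝕋 => z ^ n := by
  intro z
  obtain ⟨t, rfl⟩ := Circle.exp_surjective z
  exact ⟨Circle.exp (t / n), by
    dsimp only
    rw [← Circle.exp_intCast_mul, mul_div_cancel₀ _ (Int.cast_ne_zero.2 hn)]⟩

lemma Circle.pow_surjective {n : ℕ} (hn : n ≠ 0) : Function.Surjective fun z : 𝕋 => z ^ n := by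
  simpa only [zpow_natCast] using Circle.zpow_surjective (Int.natCast_ne_zero.2 hn)

instance : DivisibleBy (Additive 𝕋) ℤ :=
  divisibleByOfSMulRightSurj _ _ fun hn a =>
    ⟨Additive.ofMul _, congrArg Additive.ofMul (Circle.zpow_surjective hn a.toMul).choose_spec⟩

lemma Circle.exists_pow_eq_of_pow_orderOf_eq_one {x y : 𝕋} (hx : IsOfFinOrder x)
    (hy : y ^ orderOf x = 1) : ∃ i : ℕ, x ^ i = y := by
  have : NeZero (orderOf x) := ⟨hx.orderOf_pos.ne'⟩
  have hζ : IsPrimitiveRoot (x : ℂ) (orderOf x) :=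
    (IsPrimitiveRoot.orderOf x).map_of_injective (f := Circle.coeHom) Subtype.val_injective
  obtain ⟨i, -, hi⟩ := hζ.eq_pow_of_pow_eq_one (ξ := (y : ℂ)) (by
    rw [← Circle.coe_pow, hy, Circle.coe_one])
  exact ⟨i, Circle.ext (by simpa using hi)⟩

lemma Circle.exists_map_eq_zpow (Ψ : 𝕋 →* 𝕋) {x : 𝕋} (hx : IsOfFinOrder x) :
    ∃ a : ℤ, Ψ x = x ^ a := by
  obtain ⟨i, hi⟩ := Circle.exists_pow_eq_of_pow_orderOf_eq_one hx (y := Ψ x) (by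
    rw [← map_pow, pow_orderOf_eq_one, map_one])
  exact ⟨i, by rw [zpow_natCast, hi]⟩

lemma stirlingProd_eq_one_of_pow_factorial_eq_one (Ψ : 𝕋 →* 𝕋) (k : ℕ) {x : 𝕋}
    (hx : x ^ k.factorial = 1) : stirlingProd Ψ k x = 1 := by
  cases k with
  | zero => simp [stirlingProd_apply]
  | succ k =>
    obtain ⟨a, ha⟩ :=
      Circle.exists_map_eq_zpow Ψ (isOfFinOrder_iff_pow_eq_one.2 ⟨_, Nat.factorial_pos _, hx⟩)
    rw [stirlingProd_succ_apply_of_map_eq_zpow Ψ ha, hx, one_zpow]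

section Extension

variable {G : Type*} [CommGroup G]

lemma Subgroup.exists_monoidHom_circle_extension (B : Subgroup G) (f : B →* 𝕋) :
    ∃ F : G →* 𝕋, ∀ b : B, F b = f b := by
  obtain ⟨F, hF⟩ := (Module.Baer.of_divisible (Additive 𝕋)).extension_property_addMonoidHom
    (MonoidHom.toAdditive B.subtype) Subtype.val_injective (MonoidHom.toAdditive f)
  exact ⟨MonoidHom.toAdditive.symm F, fun b => DFunLike.congr_fun hF b⟩

lemma exists_monoidHom_circle_pow_eq {n : ℕ} (hn : n ≠ 0)
    (hroot : Function.Surjective fun x : G => x ^ n) (g : G →* 𝕋)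
    (hg : ∀ x, x ^ n = 1 → g x = 1) :
    ∃ φ : G →* 𝕋, ∀ x, IsOfFinOrder x → φ (x ^ n) = g x := by
  let Q := CommGroup.torsion G
  let p : Q →* Q := powMonoidHom n
  have hp : Function.Surjective p := fun t => by
    obtain ⟨r, hr : r ^ n = t⟩ := hroot t
    have hr_tors : IsOfFinOrder (r ^ n) := by rw [hr]; exact (CommGroup.mem_torsion _).1 t.2
    exact ⟨⟨r, (CommGroup.mem_torsion _).2 (hr_tors.of_pow hn)⟩, Subtype.ext hr⟩
  have hker : p.ker ≤ (g.comp Q.subtype).ker := fun t ht => hg t (congrArg Subtype.val ht)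
  obtain ⟨φ, hφ⟩ := Q.exists_monoidHom_circle_extension (p.liftOfSurjective hp ⟨_, hker⟩)
  refine ⟨φ, fun x hx => ?_⟩
  have := hφ (p ⟨x, (CommGroup.mem_torsion _).2 hx⟩)
  rwa [MonoidHom.liftOfRightInverse_comp_apply] at this

lemma exists_monoidHom_circle_apply_eq {x : G} (hx : ¬IsOfFinOrder x) (v : 𝕋) :
    ∃ C : G →* 𝕋, C x = v := by
  let e : Multiplicative ℤ ≃* (zpowersHom G x).range := MulEquiv.ofBijective
    (zpowersHom G x).rangeRestrict ⟨(zpowersHom G x).rangeRestrict_injective_iff.2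
      (injective_zpow_iff_not_isOfFinOrder.2 hx), (zpowersHom G x).rangeRestrict_surjective⟩
  obtain ⟨C, hC⟩ := Subgroup.exists_monoidHom_circle_extension _
    ((zpowersHom 𝕋 v).comp e.symm.toMonoidHom)
  refine ⟨C, ?_⟩
  have hx1 : (e (Multiplicative.ofAdd 1) : G) = x := zpow_one x
  rw [← hx1, hC]
  simp

lemma exists_monoidHom_circle_torsion_eq_one_apply_eq {x : G} (hx : ¬IsOfFinOrder x) (v : 𝕋) :
    ∃ C : G →* 𝕋, (∀ t, IsOfFinOrder t → C t = 1) ∧ C x = v := by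
  let π := QuotientGroup.mk' (CommGroup.torsion G)
  have hπx : ¬IsOfFinOrder (π x) := fun h => by
    obtain ⟨n, hn, hxn⟩ := isOfFinOrder_iff_pow_eq_one.1 h
    rw [← map_pow, QuotientGroup.mk'_apply, QuotientGroup.eq_one_iff, CommGroup.mem_torsion] at hxn
    exact hx (hxn.of_pow hn.ne')
  obtain ⟨C, hC⟩ := exists_monoidHom_circle_apply_eq hπx v
  refine ⟨C.comp π, fun t ht => ?_, hC⟩
  rw [MonoidHom.comp_apply, QuotientGroup.mk'_apply,
    (QuotientGroup.eq_one_iff t).2 ((CommGroup.mem_torsion _).2 ht), map_one]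

end Extension

lemma mem_TQ_iff {x : 𝕋} : x ∈ TQ ↔ IsOfFinOrder x := isOfFinOrder_iff_pow_eq_one.symm

lemma snoc_mem_HFin {m : ℕ} (hm : 1 ≤ m) {ψ : Fin (m + 1) → 𝕋 → 𝕋} (hψ : ψ ∈ HFin (m + 1))
    {φ : 𝕋 → 𝕋} (hφ : φ ∈ HSet)
    (hφTQ : ∀ x ∈ TQ, φ (x ^ (m + 1).factorial) =
      ∏ j ∈ Icc 1 (m + 1), (ψ ⟨1, by omega⟩)^[j] (x ^ stir (m + 1) j)) :
    (Fin.snoc ψ φ : Fin (m + 2) → 𝕋 → 𝕋) ∈ HFin (m + 2) := by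
  obtain ⟨hψhom, hψzero, hψcond⟩ := hψ
  have hone : ∀ h : 1 < m + 2,
      (Fin.snoc ψ φ : Fin (m + 2) → 𝕋 → 𝕋) ⟨1, h⟩ = ψ ⟨1, by omega⟩ := fun h =>
    Fin.snoc_castSucc (i := ⟨1, by omega⟩) ..
  refine ⟨Fin.lastCases ?_ ?_, Fin.lastCases ?_ ?_, Fin.lastCases ?_ ?_⟩
  · simpa using hφ
  · intro k; simpa using hψhom k
  · simp
  · intro k hk; simpa using hψzero k hk
  · intro _ x hx
    rw [hone]
    simpa using hφTQ x hx
  · intro k hk x hx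
    rw [hone]
    simpa using hψcond k hk x hx

/-- Extension lemma: given `(φ_k)_{k=0}^m ∈ 𝓗_m` and `x₀ ∈ 𝕋 ∖ 𝕋_Q`, the set of
possible values `φ_{m+1}(x₀)` over all extensions to `𝓗_{m+1}` is all of 𝕋. -/
theorem stmt3 (m : ℕ) (hm : 1 ≤ m) (ψ : Fin (m + 1) → 𝕋 → 𝕋) (hψ : ψ ∈ HFin (m + 1))
    (x0 : 𝕋) (hx0 : x0 ∉ TQ) :
    {y : 𝕋 | ∃ χ ∈ HFin (m + 2),
        (∀ k : Fin (m + 1), χ (Fin.castSucc k) = ψ k) ∧ χ (Fin.last (m + 1)) x0 = y} =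
      Set.univ := by
  let Ψ : 𝕋 →* 𝕋 := MonoidHom.mk' (ψ ⟨1, by omega⟩) (hψ.1 _)
  have hM : (m + 1).factorial ≠ 0 := Nat.factorial_ne_zero _
  obtain ⟨φ₀, hφ₀⟩ := exists_monoidHom_circle_pow_eq hM (Circle.pow_surjective hM)
    (stirlingProd Ψ (m + 1)) fun _ => stirlingProd_eq_one_of_pow_factorial_eq_one Ψ (m + 1)
  refine Set.eq_univ_of_forall fun y => ?_
  obtain ⟨C, hC_torsion, hC_x0⟩ :=
    exists_monoidHom_circle_torsion_eq_one_apply_eq (mt mem_TQ_iff.2 hx0) (y / φ₀ x0)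
  refine ⟨Fin.snoc ψ ⇑(φ₀ * C), snoc_mem_HFin hm hψ (map_mul (φ₀ * C)) fun x hx => ?_,
    fun k => Fin.snoc_castSucc .., ?_⟩
  · have hx : IsOfFinOrder x := mem_TQ_iff.1 hx
    rw [MonoidHom.mul_apply, hφ₀ x hx, hC_torsion _ hx.pow, mul_one]
    rfl
  · rw [Fin.snoc_last, MonoidHom.mul_apply, hC_x0, mul_div_cancel]
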